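/- Let p ≥ 2 and let (a_i)_{i≥0} be a solution of the semi-infinite lattice a_i' = a_i(∏_{j=1}^p a_{i+j} − ∏_{j=1}^p a_{i−j}) on [0,T) with a_i(t) ≠ 0 for all i,t (and a_l ≡ 0 for l < 0). Put b_i(t) := a_i(t) a_{i+1}(t) ⋯ a_{i+p−1}(t). Let S_k^l(t) be the moments of L1(t) built from (a_i(t)) and S̃_k^l(t) the moments of L2(t) built from (b_i(t)). Then for every t ∈ [0,T), every k ≥ 0 and every 1 ≤ l ≤ p: S_{l−1}^l(t) ≠ 0 and S_k^l(t) = S_{l−1}^l(t)·S̃_k^l(t) (equivalently, S_k^l(t)/S_{l−1}^l(t) = S̃_k^l(t)). -/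

import Mathlib

/-!
With `D_m = a_0 ⋯ a_{m-1}` and `b_m = a_m ⋯ a_{m+p-1}` one has `D_{m+1} = D_m a_m` and
`D_{m+p} = D_m b_m`, so conjugating the transpose of `L2` by `D = diag(D_m)` gives exactly `L1`.
Hence `(L1^k)_{m,0} = D_m (L2^k)_{0,m}`. Since `L2 e_m` is supported on `{m - 1, m + p}`,
`(L2^k)_{0,m}` vanishes for `m > k` and equals `1` for `m = k`; taking `m = l - 1` gives both
claims, the first because the `a_i` do not vanish.
-/

open scoped BigOperators

noncomputable section

/-- The `j`-th standard basis sequence `e_j`. -/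
def stdBasis (j : ℕ) : ℕ → ℂ := fun i => if i = j then 1 else 0

/-- Entries of the matrix `L1`: `(L1)_{i,i+p} = 1`, `(L1)_{i+1,i} = a_i`, other entries zero. -/
def L1entry (p : ℕ) (a : ℕ → ℂ) : ℕ → ℕ → ℂ :=
  fun i k => if k = i + p then 1 else if i = k + 1 then a k else 0

/-- Action of `L1` on a sequence. -/
def L1apply (p : ℕ) (a : ℕ → ℂ) (v : ℕ → ℂ) : ℕ → ℂ :=
  fun i => ∑ k ∈ Finset.range (i + p + 1), L1entry p a i k * v k

/-- The moments of `L1`: `S_k^l = (L1^k e_0)_{l-1}`. -/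
def momL1 (p : ℕ) (a : ℕ → ℂ) (k m : ℕ) : ℂ :=
  (L1apply p a)^[k] (stdBasis 0) (m - 1)

/-- Entries of the matrix `L2`: `(L2)_{i,i+1} = 1`, `(L2)_{i+p,i} = b_i`, other entries zero. -/
def L2entry (p : ℕ) (b : ℕ → ℂ) : ℕ → ℕ → ℂ :=
  fun i k => if k = i + 1 then 1 else if i = k + p then b k else 0

/-- Action of `L2` on a sequence. -/
def L2apply (p : ℕ) (b : ℕ → ℂ) (v : ℕ → ℂ) : ℕ → ℂ :=
  fun i => ∑ k ∈ Finset.range (i + 2), L2entry p b i k * v k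

/-- The moments of `L2`: `S̃_k^l = (L2^k e_{l-1})_0`. -/
def momL2 (p : ℕ) (b : ℕ → ℂ) (k n : ℕ) : ℂ :=
  (L2apply p b)^[k] (stdBasis (n - 1)) 0

open Finset

/-- `(L1^k)_{m,0}`. -/
def L1powColZero (p : ℕ) (a : ℕ → ℂ) (k m : ℕ) : ℂ := (L1apply p a)^[k] (stdBasis 0) m

/-- `(L2^k)_{0,m}`. -/
def L2powRowZero (p : ℕ) (b : ℕ → ℂ) (k m : ℕ) : ℂ := (L2apply p b)^[k] (stdBasis m) 0

def miuraMap (p : ℕ) (a : ℕ → ℂ) (n : ℕ) : ℂ := ∏ j ∈ range p, a (n + j)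

section L1

variable (p : ℕ) (a : ℕ → ℂ)

theorem L1apply_zero (v : ℕ → ℂ) : L1apply p a v 0 = v p := by
  rw [L1apply, sum_eq_single p (fun k _ hk => by simp [L1entry, hk]) (by simp)]
  simp [L1entry]

theorem L1apply_succ (v : ℕ → ℂ) (m : ℕ) : L1apply p a v (m + 1) = v (m + 1 + p) + a m * v m := by
  rw [L1apply, sum_eq_add_of_mem (m + 1 + p) m (by simp) (by simp; omega) (by omega)
    (fun k _ hk => by simp [L1entry, hk.1, hk.2.symm])]
  simp [L1entry, show m ≠ m + 1 + p by omega]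

theorem L1powColZero_zero (m : ℕ) : L1powColZero p a 0 m = if m = 0 then 1 else 0 := rfl

theorem L1powColZero_succ_zero (k : ℕ) : L1powColZero p a (k + 1) 0 = L1powColZero p a k p := by
  rw [L1powColZero, Function.iterate_succ_apply', L1apply_zero]
  rfl

theorem L1powColZero_succ_succ (k m : ℕ) :
    L1powColZero p a (k + 1) (m + 1) =
      L1powColZero p a k (m + 1 + p) + a m * L1powColZero p a k m := by
  rw [L1powColZero, Function.iterate_succ_apply', L1apply_succ]
  rfl

end L1

section L2

variable (p : ℕ) (b : ℕ → ℂ)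

theorem L2apply_stdBasis_zero : L2apply p b (stdBasis 0) = b 0 • stdBasis p := by
  funext i
  rw [L2apply, sum_eq_single 0 (fun k _ hk => by simp [stdBasis, hk]) (by simp)]
  simp [L2entry, stdBasis, eq_comm]

theorem L2apply_stdBasis_succ (m : ℕ) :
    L2apply p b (stdBasis (m + 1)) = stdBasis m + b (m + 1) • stdBasis (m + 1 + p) := by
  funext i
  rw [L2apply, sum_eq_single (m + 1) (fun k _ hk => by simp [stdBasis, hk]) (fun h => by
    simp only [mem_range] at h
    simp only [L2entry, if_neg (show m + 1 ≠ i + 1 by omega), if_neg (show i ≠ m + 1 + p by omega),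
      zero_mul])]
  simp only [L2entry, stdBasis, Pi.add_apply, Pi.smul_apply, smul_eq_mul]
  split_ifs <;> first | omega | simp

def L2lin : Module.End ℂ (ℕ → ℂ) where
  toFun := L2apply p b
  map_add' u v := by
    funext i
    simp only [L2apply, Pi.add_apply, mul_add, sum_add_distrib]
  map_smul' c v := by
    funext i
    simp only [L2apply, Pi.smul_apply, smul_eq_mul, RingHom.id_apply, mul_sum]
    exact sum_congr rfl fun _ _ => by ring

theorem iterate_L2apply (k : ℕ) : (L2apply p b)^[k] = ⇑(L2lin p b ^ k) :=
  (Module.End.coe_pow (L2lin p b) k).symm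

theorem L2powRowZero_zero (m : ℕ) : L2powRowZero p b 0 m = if m = 0 then 1 else 0 := by
  simp [L2powRowZero, stdBasis, eq_comm]

theorem L2powRowZero_succ_zero (k : ℕ) :
    L2powRowZero p b (k + 1) 0 = b 0 * L2powRowZero p b k p := by
  rw [L2powRowZero, Function.iterate_succ_apply, L2apply_stdBasis_zero, iterate_L2apply, map_smul,
    Pi.smul_apply, smul_eq_mul, ← iterate_L2apply]
  rfl

theorem L2powRowZero_succ_succ (k m : ℕ) :
    L2powRowZero p b (k + 1) (m + 1) =
      L2powRowZero p b k m + b (m + 1) * L2powRowZero p b k (m + 1 + p) := by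
  rw [L2powRowZero, Function.iterate_succ_apply, L2apply_stdBasis_succ, iterate_L2apply, map_add,
    map_smul, Pi.add_apply, Pi.smul_apply, smul_eq_mul, ← iterate_L2apply]
  rfl

theorem L2powRowZero_eq_zero_of_lt {k m : ℕ} (h : k < m) : L2powRowZero p b k m = 0 := by
  induction k generalizing m with
  | zero => simp [L2powRowZero_zero, Nat.pos_iff_ne_zero.mp h]
  | succ k ih =>
    obtain ⟨m, rfl⟩ := Nat.exists_eq_add_one_of_ne_zero (by omega : m ≠ 0)
    rw [L2powRowZero_succ_succ, ih (by omega), ih (by omega), mul_zero, add_zero]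

theorem L2powRowZero_self (k : ℕ) : L2powRowZero p b k k = 1 := by
  induction k with
  | zero => simp [L2powRowZero_zero]
  | succ k ih =>
    rw [L2powRowZero_succ_succ, ih, L2powRowZero_eq_zero_of_lt p b (by omega), mul_zero, add_zero]

end L2

theorem prod_range_add_mul_miuraMap (p : ℕ) (a : ℕ → ℂ) (m : ℕ) :
    (∏ j ∈ range m, a j) * miuraMap p a m = ∏ j ∈ range (m + p), a j :=
  (prod_range_add a m p).symm

theorem L1powColZero_eq_prod_mul_L2powRowZero (p : ℕ) (a : ℕ → ℂ) (k m : ℕ) :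
    L1powColZero p a k m = (∏ j ∈ range m, a j) * L2powRowZero p (miuraMap p a) k m := by
  induction k generalizing m with
  | zero => cases m <;> simp [L1powColZero_zero, L2powRowZero_zero]
  | succ k ih =>
    cases m with
    | zero =>
      rw [L1powColZero_succ_zero, L2powRowZero_succ_zero, ih]
      simp [miuraMap]
    | succ m =>
      rw [L1powColZero_succ_succ, L2powRowZero_succ_succ, ih, ih,
        ← prod_range_add_mul_miuraMap, prod_range_succ]
      ring

theorem momL1_succ (p : ℕ) (a : ℕ → ℂ) (k m : ℕ) : momL1 p a k (m + 1) = L1powColZero p a k m :=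
  rfl

theorem momL2_succ (p : ℕ) (b : ℕ → ℂ) (k m : ℕ) : momL2 p b k (m + 1) = L2powRowZero p b k m :=
  rfl

theorem miura_moments_direct_general (p : ℕ) (T : ℝ)
    (a : ℤ → ℝ → ℂ)
    (hane : ∀ i : ℤ, 0 ≤ i → ∀ t ∈ Set.Ico (0 : ℝ) T, a i t ≠ 0) :
    ∀ t ∈ Set.Ico (0 : ℝ) T, ∀ k l : ℕ, 1 ≤ l → l ≤ p →
      momL1 p (fun n : ℕ => a (n : ℤ) t) (l - 1) l ≠ 0 ∧
      momL1 p (fun n : ℕ => a (n : ℤ) t) k l =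
        momL1 p (fun n : ℕ => a (n : ℤ) t) (l - 1) l *
          momL2 p (fun n : ℕ => ∏ j ∈ Finset.range p, a ((n : ℤ) + (j : ℤ)) t) k l := by
  intro t ht k l hl _
  obtain ⟨m, rfl⟩ := Nat.exists_eq_add_one_of_ne_zero (by omega : l ≠ 0)
  have hb : (fun n : ℕ => ∏ j ∈ range p, a ((n : ℤ) + (j : ℤ)) t) =
      miuraMap p (fun n : ℕ => a (n : ℤ) t) := by
    funext n
    simp [miuraMap]
  have hD : ∏ j ∈ range m, a (j : ℤ) t ≠ 0 :=
    prod_ne_zero_iff.mpr fun j _ => hane j (Int.natCast_nonneg j) t ht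
  rw [hb, Nat.add_sub_cancel, momL1_succ, momL1_succ, momL2_succ,
    L1powColZero_eq_prod_mul_L2powRowZero, L1powColZero_eq_prod_mul_L2powRowZero,
    L2powRowZero_self, mul_one]
  exact ⟨hD, rfl⟩

/-- Description of the Miura transformation `b_i = a_i ⋯ a_{i+p−1}` in terms of moments:
`S_{l−1}^l(t) ≠ 0` and `S_k^l(t) = S_{l−1}^l(t) · S̃_k^l(t)`. -/
theorem miura_moments_direct (p : ℕ) (hp : 2 ≤ p) (T : ℝ) (hT : 0 < T)
    (a : ℤ → ℝ → ℂ)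
    (haneg : ∀ l : ℤ, l < 0 → ∀ t : ℝ, a l t = 0)
    (hane : ∀ i : ℤ, 0 ≤ i → ∀ t ∈ Set.Ico (0 : ℝ) T, a i t ≠ 0)
    (haode : ∀ i : ℤ, 0 ≤ i → ∀ t ∈ Set.Ico (0 : ℝ) T, HasDerivWithinAt (a i)
      (a i t * (∏ j ∈ Finset.Icc 1 p, a (i + (j : ℤ)) t -
        ∏ j ∈ Finset.Icc 1 p, a (i - (j : ℤ)) t)) (Set.Ico (0 : ℝ) T) t) :
    ∀ t ∈ Set.Ico (0 : ℝ) T, ∀ k l : ℕ, 1 ≤ l → l ≤ p →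
      momL1 p (fun n : ℕ => a (n : ℤ) t) (l - 1) l ≠ 0 ∧
      momL1 p (fun n : ℕ => a (n : ℤ) t) k l =
        momL1 p (fun n : ℕ => a (n : ℤ) t) (l - 1) l *
          momL2 p (fun n : ℕ => ∏ j ∈ Finset.range p, a ((n : ℤ) + (j : ℤ)) t) k l :=
  miura_moments_direct_general p T a hane
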